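/- arXiv:1911.10302 — 2 statements merged into one kernel-verified Lean document; each statement's English description precedes it below -/
import Mathlib

section
/- Let K be a Killing field on ℝ³ and let (u,p) be a smooth solution of the incompressible Euler equations on I × ℝ³ with [K, u(t,·)] = 0 for every t ∈ I, and suppose that for each t ∈ I the function ⟨∇ₓp(t,x), K(x)⟩ tends to 0 as |x| → ∞. Let γ : I × ℝ³ → ℝ³ be a flow of u, i.e. ∂ₜγ(t,x) = u(t, γ(t,x)) and γ(0,x) = x. Then the swirl is transported by the flow: ⟨u(t, γ(t,x)), K(γ(t,x))⟩ = ⟨u(0,x), K(x)⟩ for all t ∈ I and x ∈ ℝ³. -/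
noncomputable section

/-- Vectors in ℝ³. -/
abbrev V3 : Type := Fin 3 → ℝ

/-- Euclidean inner product on ℝ³. -/
def dot3 (u v : V3) : ℝ := ∑ i, u i * v i

/-- Cross product on ℝ³. -/
def cross3 (u v : V3) : V3 :=
  ![u 1 * v 2 - u 2 * v 1, u 2 * v 0 - u 0 * v 2, u 0 * v 1 - u 1 * v 0]

/-- Partial derivative ∂ᵢ of a scalar function. -/
def pd (i : Fin 3) (f : V3 → ℝ) (x : V3) : ℝ := fderiv ℝ f x (Pi.single i 1)

/-- Gradient of a scalar function. -/
def grad3 (f : V3 → ℝ) (x : V3) : V3 := fun i => pd i f x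

/-- Divergence of a vector field. -/
def div3 (X : V3 → V3) (x : V3) : ℝ := ∑ i, fderiv ℝ X x (Pi.single i 1) i

/-- Curl of a vector field. -/
def curl3 (X : V3 → V3) (x : V3) : V3 :=
  ![pd 1 (fun y => X y 2) x - pd 2 (fun y => X y 1) x,
    pd 2 (fun y => X y 0) x - pd 0 (fun y => X y 2) x,
    pd 0 (fun y => X y 1) x - pd 1 (fun y => X y 0) x]

/-- Lie bracket of vector fields: [X,Y](x) = DY(x)X(x) − DX(x)Y(x). -/
def bracket3 (X Y : V3 → V3) (x : V3) : V3 := fderiv ℝ Y x (X x) - fderiv ℝ X x (Y x)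

/-- `K` is a Killing field of the Euclidean metric on `U`: `DK(x)` is antisymmetric on `U`. -/
def IsKillingOn (K : V3 → V3) (U : Set V3) : Prop :=
  ∀ x ∈ U, ∀ v w : V3, dot3 (fderiv ℝ K x v) w + dot3 v (fderiv ℝ K x w) = 0

/-- `(u,p)` solves the incompressible Euler equations on `I × ℝ³`:
∂ₜu + (Dₓu)u = −∇ₓp and divₓ u = 0. -/
def IsEulerSolution (I : Set ℝ) (u : ℝ → V3 → V3) (p : ℝ → V3 → ℝ) : Prop :=
  (∀ t ∈ I, ∀ x : V3, deriv (fun s => u s x) t + fderiv ℝ (u t) x (u t x)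
      = -grad3 (p t) x) ∧
  (∀ t ∈ I, ∀ x : V3, div3 (u t) x = 0)

/-! Along a particle path the swirl `⟨u, K⟩` changes at the rate
`⟨∂ₜu + (Dₓu)u, K⟩ + ⟨u, DK u⟩ = -⟨∇p, K⟩`, the second term vanishing because `DK` is
antisymmetric. So it suffices that `⟨∇p, K⟩ = 0`.

A Killing field has vanishing second derivative (a trilinear form symmetric in its first two
slots and antisymmetric in its last two is zero), so `DK` is constant. For such `K`, commuting
with the spacetime field `(1, u)` implies commuting with its self-derivative
`(0, ∂ₜu + (Dₓu)u) = (0, -∇p)`; hence `[K, ∇p] = 0`. Since the Hessian of `p` is symmetric and `DK`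
antisymmetric, the derivative of `⟨∇p, K⟩` is `⟨[K, ∇p], ·⟩ = 0`, so `⟨∇p, K⟩` is constant in
space, and the decay at infinity makes it zero. -/

open Filter Set Topology VectorField ContinuousLinearMap

lemma dot3_eq_dotProduct : dot3 = dotProduct := rfl

lemma eq_zero_of_forall_dot3_eq_zero {a : V3} (h : ∀ z, dot3 a z = 0) : a = 0 :=
  dotProduct_self_eq_zero.mp (h a)

def dot3L : V3 →L[ℝ] V3 →L[ℝ] ℝ :=
  LinearMap.toContinuousLinearMap
    (LinearMap.toContinuousLinearMap.toLinearMap ∘ₗ dotProductBilin ℝ ℝ)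

@[simp] lemma dot3L_apply (a b : V3) : dot3L a b = dot3 a b := rfl

section
variable {E : Type*} [NormedAddCommGroup E] [NormedSpace ℝ E] {A B : E → V3}
  {A' B' : E →L[ℝ] V3} {x : E}

theorem HasFDerivAt.dot3 (hA : HasFDerivAt A A' x) (hB : HasFDerivAt B B' x) :
    HasFDerivAt (fun y => dot3 (A y) (B y))
      (dot3L.precompR E (A x) B' + dot3L.precompL E A' (B x)) x :=
  dot3L.hasFDerivAt_of_bilinear hA hB

@[simp] lemma dot3L_precompR_apply (a : V3) (v : E) :
    dot3L.precompR E a B' v = dot3 a (B' v) := rfl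

@[simp] lemma dot3L_precompL_apply (b : V3) (v : E) :
    dot3L.precompL E A' b v = dot3 (A' v) b := rfl

end

theorem HasDerivAt.dot3 {A B : ℝ → V3} {a b : V3} {t : ℝ} (hA : HasDerivAt A a t)
    (hB : HasDerivAt B b t) :
    HasDerivAt (fun s => dot3 (A s) (B s)) (dot3 (A t) b + dot3 a (B t)) t := by
  simpa using (hA.hasFDerivAt.dot3 hB.hasFDerivAt).hasDerivAt

lemma eq_zero_of_symm_of_dot3_skew {H : V3 → V3 → V3} (hsymm : ∀ v w, H v w = H w v)
    (hskew : ∀ v w z, dot3 (H v w) z = -dot3 (H v z) w) (v w : V3) : H v w = 0 := by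
  refine eq_zero_of_forall_dot3_eq_zero fun z => ?_
  have : dot3 (H v w) z = -dot3 (H v w) z :=
    calc dot3 (H v w) z = -dot3 (H z v) w := by rw [hskew, hsymm]
      _ = dot3 (H w z) v := by rw [hskew, neg_neg, hsymm]
      _ = -dot3 (H v w) z := by rw [hskew, hsymm]
  linarith

theorem IsKillingOn.fderiv_fderiv_eq_zero {K : V3 → V3} {U : Set V3} {x : V3}
    (hKill : IsKillingOn K U) (hU : U ∈ 𝓝 x) (hK : ContDiffAt ℝ 2 K x) :
    fderiv ℝ (fderiv ℝ K) x = 0 := by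
  set H := fderiv ℝ (fderiv ℝ K) x
  have hH : HasFDerivAt (fderiv ℝ K) H x :=
    ((hK.fderiv_right le_rfl).differentiableAt one_ne_zero).hasFDerivAt
  have hskew : ∀ v w z, dot3 (H v w) z = -dot3 (H v z) w := by
    intro v w z
    have hw := (hH.clm_apply (hasFDerivAt_const w x)).dot3 (hasFDerivAt_const z x)
    have hz := (hH.clm_apply (hasFDerivAt_const z x)).dot3 (hasFDerivAt_const w x)
    have hKill_near : (fun y => dot3 (fderiv ℝ K y w) z + dot3 (fderiv ℝ K y z) w)
        =ᶠ[𝓝 x] fun _ => 0 := by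
      filter_upwards [hU] with y hy
      rw [dot3_eq_dotProduct, dotProduct_comm (fderiv ℝ K y z)]
      exact hKill y hy w z
    have h := congrArg (· v)
      ((hw.add hz).unique ((hasFDerivAt_const 0 x).congr_of_eventuallyEq hKill_near))
    simp only [add_apply, dot3L_precompL_apply, comp_zero, zero_add,
      flip_apply, zero_apply, map_zero] at h
    linarith
  ext v w : 2
  exact eq_zero_of_symm_of_dot3_skew (hK.isSymmSndFDerivAt (by simp)) hskew v w

theorem IsKillingOn.fderiv_eq {K : V3 → V3} (hKill : IsKillingOn K univ) (hK : ContDiff ℝ 2 K)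
    (x y : V3) : fderiv ℝ K x = fderiv ℝ K y :=
  is_const_of_fderiv_eq_zero ((hK.fderiv_right le_rfl).differentiable one_ne_zero)
    (fun _ => hKill.fderiv_fderiv_eq_zero univ_mem hK.contDiffAt) x y

theorem IsKillingOn.hasFDerivAt_dot3 {K G : V3 → V3} {U : Set V3} {y : V3}
    (hKill : IsKillingOn K U) (hy : y ∈ U) (hK : DifferentiableAt ℝ K y)
    (hG : DifferentiableAt ℝ G y)
    (hGsymm : ∀ v w, dot3 (fderiv ℝ G y v) w = dot3 (fderiv ℝ G y w) v) :
    HasFDerivAt (fun z => dot3 (G z) (K z)) (dot3L (lieBracket ℝ K G y)) y := by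
  refine (hG.hasFDerivAt.dot3 hK.hasFDerivAt).congr_fderiv (ext fun v => ?_)
  have := hKill y hy v (G y)
  rw [add_apply, dot3L_precompR_apply, dot3L_precompL_apply, hGsymm, dot3L_apply, lieBracket_eq]
  simp only [dot3_eq_dotProduct, sub_dotProduct, dotProduct_comm v,
    dotProduct_comm (G y)] at this ⊢
  linarith

lemma dot3_grad3 (f : V3 → ℝ) (y v : V3) : dot3 (grad3 f y) v = fderiv ℝ f y v := by
  conv_rhs => rw [pi_eq_sum_univ' v]
  simp [dot3, grad3, pd, mul_comm]

lemma ContDiffAt.differentiableAt_grad3 {f : V3 → ℝ} {x : V3} (hf : ContDiffAt ℝ 2 f x) :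
    DifferentiableAt ℝ (grad3 f) x :=
  differentiableAt_pi.2 fun _ =>
    ((hf.fderiv_right le_rfl).differentiableAt one_ne_zero).clm_apply (differentiableAt_const _)

theorem ContDiffAt.dot3_fderiv_grad3 {f : V3 → ℝ} {x : V3} (hf : ContDiffAt ℝ 2 f x)
    (v w : V3) : dot3 (fderiv ℝ (grad3 f) x v) w = fderiv ℝ (fderiv ℝ f) x v w := by
  have hH : HasFDerivAt (fderiv ℝ f) (fderiv ℝ (fderiv ℝ f) x) x :=
    ((hf.fderiv_right le_rfl).differentiableAt one_ne_zero).hasFDerivAt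
  have h := (hf.differentiableAt_grad3.hasFDerivAt.dot3 (hasFDerivAt_const w x)).unique
    (by simpa only [dot3_grad3] using hH.clm_apply (hasFDerivAt_const w x))
  simpa using congrArg (· v) h

theorem lieBracket_fderiv_apply_self_eq_zero {E : Type*} [NormedAddCommGroup E]
    [NormedSpace ℝ E] {K X : E → E} {L : E →L[ℝ] E} {y : E} (hK : ∀ z, HasFDerivAt K L z)
    (hX : ContDiffAt ℝ 2 X y) (hbr : lieBracket ℝ K X =ᶠ[𝓝 y] 0) :
    lieBracket ℝ K (fun z => fderiv ℝ X z (X z)) y = 0 := by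
  set S := fderiv ℝ (fderiv ℝ X) y
  have hS : HasFDerivAt (fderiv ℝ X) S y :=
    ((hX.fderiv_right le_rfl).differentiableAt one_ne_zero).hasFDerivAt
  have hX' : HasFDerivAt X (fderiv ℝ X y) y := (hX.differentiableAt two_ne_zero).hasFDerivAt
  have hbr_y : fderiv ℝ X y (K y) = L (X y) := by
    simpa [lieBracket_eq, (hK y).fderiv, sub_eq_zero] using hbr.eq_of_nhds
  have hbr_deriv : ∀ w, S w (K y) + fderiv ℝ X y (L w) - L (fderiv ℝ X y w) = 0 := by
    have hbr' : (fun z => fderiv ℝ X z (K z) - L (X z)) =ᶠ[𝓝 y] fun _ => 0 := by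
      filter_upwards [hbr] with z hz
      simpa [lieBracket_eq, (hK z).fderiv] using hz
    have h := ((hS.clm_apply (hK y)).sub (L.hasFDerivAt.comp y hX')).unique
      ((hasFDerivAt_const 0 y).congr_of_eventuallyEq hbr')
    intro w
    simpa [add_comm] using congrArg (· w) h
  simp only [lieBracket_eq]
  rw [(hS.clm_apply hX').fderiv, (hK y).fderiv]
  simp only [add_apply, comp_apply, flip_apply, hbr_y]
  rw [hX.isSymmSndFDerivAt (by simp) (K y)]
  linear_combination (norm := module) hbr_deriv (X y)

section Spacetime
variable {E : Type*} [NormedAddCommGroup E] [NormedSpace ℝ E]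

lemma fderiv_apply_zero_prod {G : ℝ × E → E} {t : ℝ} {x : E}
    (hG : DifferentiableAt ℝ G (t, x)) (v : E) :
    fderiv ℝ G (t, x) (0, v) = fderiv ℝ (fun y => G (t, y)) x v := by
  have h : HasFDerivAt (fun y => G (t, y)) ((fderiv ℝ G (t, x)).comp (.inr ℝ ℝ E)) x :=
    hG.hasFDerivAt.comp x (hasFDerivAt_prodMk_right t x)
  rw [h.fderiv]
  rfl

lemma lieBracket_zero_prod_const_prod {K : E → E} {G : ℝ × E → E} {c : ℝ} {t : ℝ} {x : E}
    (hK : DifferentiableAt ℝ K x) (hG : DifferentiableAt ℝ G (t, x)) :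
    lieBracket ℝ (fun q : ℝ × E => ((0 : ℝ), K q.2)) (fun q => (c, G q)) (t, x)
      = (0, lieBracket ℝ K (fun y => G (t, y)) x) := by
  have hK' : HasFDerivAt (fun q : ℝ × E => ((0 : ℝ), K q.2))
      ((0 : ℝ × E →L[ℝ] ℝ).prod ((fderiv ℝ K x).comp (.snd ℝ ℝ E))) (t, x) :=
    (hasFDerivAt_const 0 _).prodMk (hK.hasFDerivAt.comp (t, x) hasFDerivAt_snd)
  have hG' : HasFDerivAt (fun q => (c, G q)) ((0 : ℝ × E →L[ℝ] ℝ).prod (fderiv ℝ G (t, x)))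
      (t, x) :=
    (hasFDerivAt_const c _).prodMk hG.hasFDerivAt
  simp [lieBracket_eq, hK'.fderiv, hG'.fderiv, fderiv_apply_zero_prod hG]

def acceleration (F : ℝ × E → E) (q : ℝ × E) : E := fderiv ℝ F q (1, F q)

lemma acceleration_eq_deriv_add_fderiv {F : ℝ × E → E} {t : ℝ} {x : E}
    (hF : DifferentiableAt ℝ F (t, x)) :
    acceleration F (t, x)
      = deriv (fun s => F (s, x)) t + fderiv ℝ (fun y => F (t, y)) x (F (t, x)) := by
  have ht : HasDerivAt (fun s => F (s, x)) (fderiv ℝ F (t, x) (1, 0)) t :=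
    hF.hasFDerivAt.comp_hasDerivAt t ((hasDerivAt_id t).prodMk (hasDerivAt_const t x))
  rw [ht.deriv, ← fderiv_apply_zero_prod hF, ← map_add, acceleration]
  simp

lemma hasDerivAt_along_integralCurve {F : ℝ × E → E} {c : ℝ → E} {t : ℝ}
    (hF : DifferentiableAt ℝ F (t, c t)) (hc : HasDerivAt c (F (t, c t)) t) :
    HasDerivAt (fun s => F (s, c s)) (acceleration F (t, c t)) t :=
  hF.hasFDerivAt.comp_hasDerivAt t ((hasDerivAt_id t).prodMk hc)

theorem lieBracket_acceleration_eq_zero {K : E → E} {L : E →L[ℝ] E} {F : ℝ × E → E} {t : ℝ}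
    {x : E} (hK : ∀ z, HasFDerivAt K L z) (hF : ContDiffAt ℝ 2 F (t, x))
    (hbr : ∀ᶠ q in 𝓝 (t, x), lieBracket ℝ K (fun y => F (q.1, y)) q.2 = 0) :
    lieBracket ℝ K (fun y => acceleration F (t, y)) x = 0 := by
  set K' := fun q : ℝ × E => ((0 : ℝ), K q.2)
  set U := fun q : ℝ × E => ((1 : ℝ), F q)
  have hK' : ∀ q, HasFDerivAt K' ((0 : ℝ × E →L[ℝ] ℝ).prod (L.comp (.snd ℝ ℝ E))) q := fun q =>
    (hasFDerivAt_const 0 q).prodMk ((hK q.2).comp q hasFDerivAt_snd)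
  have hF_near := hF.eventually (by simp)
  have hbrU : lieBracket ℝ K' U =ᶠ[𝓝 (t, x)] 0 := by
    filter_upwards [hF_near, hbr] with q hq hbrq
    rw [lieBracket_zero_prod_const_prod (hK q.2).differentiableAt
      (hq.differentiableAt two_ne_zero), hbrq]
    rfl
  have hU_self : (fun q => fderiv ℝ U q (U q)) =ᶠ[𝓝 (t, x)] fun q => (0, acceleration F q) := by
    filter_upwards [hF_near] with q hq
    rw [((hasFDerivAt_const 1 q).prodMk (hq.differentiableAt two_ne_zero).hasFDerivAt).fderiv]
    rfl
  have hacc : DifferentiableAt ℝ (acceleration F) (t, x) :=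
    ((hF.fderiv_right (m := 1) le_rfl).differentiableAt one_ne_zero).clm_apply
      ((differentiableAt_const _).prodMk (hF.differentiableAt two_ne_zero))
  have h := lieBracket_fderiv_apply_self_eq_zero hK' (contDiffAt_const.prodMk hF) hbrU
  rw [EventuallyEq.rfl.lieBracket_vectorField_eq hU_self,
    lieBracket_zero_prod_const_prod (hK x).differentiableAt hacc] at h
  exact congrArg Prod.snd h

end Spacetime

theorem hasDerivAt_swirl_along_integralCurve {K : V3 → V3} {U : Set V3} {F : ℝ × V3 → V3}
    {c : ℝ → V3} {t : ℝ} (hKill : IsKillingOn K U) (hct : c t ∈ U)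
    (hK : DifferentiableAt ℝ K (c t)) (hF : DifferentiableAt ℝ F (t, c t))
    (hc : HasDerivAt c (F (t, c t)) t) :
    HasDerivAt (fun s => dot3 (F (s, c s)) (K (c s)))
      (dot3 (acceleration F (t, c t)) (K (c t))) t := by
  have hKc : HasDerivAt (fun s => K (c s)) (fderiv ℝ K (c t) (F (t, c t))) t :=
    hK.hasFDerivAt.comp_hasDerivAt t hc
  convert (hasDerivAt_along_integralCurve hF hc).dot3 hKc using 1
  have := hKill (c t) hct (F (t, c t)) (F (t, c t))
  rw [dot3_eq_dotProduct, dotProduct_comm] at this ⊢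
  linarith

lemma eq_zero_of_hasFDerivAt_zero_of_tendsto_cocompact {E F : Type*} [NormedAddCommGroup E]
    [NormedSpace ℝ E] [Nontrivial E] [NormedAddCommGroup F] [NormedSpace ℝ F] {f : E → F}
    (hf : ∀ x, HasFDerivAt f (0 : E →L[ℝ] F) x) (hlim : Tendsto f (cocompact E) (𝓝 0))
    (x : E) : f x = 0 := by
  have hconst : f = fun _ => f x :=
    funext fun y => is_const_of_fderiv_eq_zero (fun z => (hf z).differentiableAt)
      (fun z => (hf z).fderiv) y x
  rw [hconst] at hlim
  exact tendsto_nhds_unique tendsto_const_nhds hlim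

theorem dot3_grad3_eq_zero_of_lieBracket {K : V3 → V3} {f : V3 → ℝ}
    (hKill : IsKillingOn K univ) (hK : Differentiable ℝ K) (hf : ∀ x, ContDiffAt ℝ 2 f x)
    (hbr : ∀ x, lieBracket ℝ K (grad3 f) x = 0)
    (hlim : Tendsto (fun x => dot3 (grad3 f x) (K x)) (cocompact V3) (𝓝 0)) (x : V3) :
    dot3 (grad3 f x) (K x) = 0 := by
  refine eq_zero_of_hasFDerivAt_zero_of_tendsto_cocompact (fun y => ?_) hlim x
  have hsymm : ∀ v w, dot3 (fderiv ℝ (grad3 f) y v) w = dot3 (fderiv ℝ (grad3 f) y w) v :=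
    fun v w => by
      rw [(hf y).dot3_fderiv_grad3, (hf y).dot3_fderiv_grad3,
        (hf y).isSymmSndFDerivAt (by simp)]
  simpa [hbr y] using
    hKill.hasFDerivAt_dot3 (mem_univ y) (hK y) (hf y).differentiableAt_grad3 hsymm

section Euler
variable {I : Set ℝ} {u : ℝ → V3 → V3} {p : ℝ → V3 → ℝ} {t : ℝ} {x : V3}

lemma IsEulerSolution.acceleration_eq (heuler : IsEulerSolution I u p) (ht : t ∈ I)
    (hu : DifferentiableAt ℝ (fun q : ℝ × V3 => u q.1 q.2) (t, x)) :
    acceleration (fun q : ℝ × V3 => u q.1 q.2) (t, x) = -grad3 (p t) x := by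
  rw [acceleration_eq_deriv_add_fderiv hu]
  exact heuler.1 t ht x

theorem IsEulerSolution.lieBracket_grad3_eq_zero {K : V3 → V3} {L : V3 →L[ℝ] V3}
    (heuler : IsEulerSolution I u p) (hI : IsOpen I)
    (hu : ContDiffOn ℝ 2 (fun q : ℝ × V3 => u q.1 q.2) (I ×ˢ univ))
    (hp : ContDiffAt ℝ 2 (p t) x) (hK : ∀ z, HasFDerivAt K L z)
    (haxi : ∀ t ∈ I, ∀ x, bracket3 K (u t) x = 0) (ht : t ∈ I) :
    lieBracket ℝ K (grad3 (p t)) x = 0 := by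
  have hIU : ∀ y, I ×ˢ (univ : Set V3) ∈ 𝓝 (t, y) := fun y =>
    (hI.prod isOpen_univ).mem_nhds ⟨ht, mem_univ y⟩
  have hacc : (fun y => acceleration (fun q : ℝ × V3 => u q.1 q.2) (t, y))
      = (-1 : ℝ) • grad3 (p t) :=
    funext fun y => by
      rw [heuler.acceleration_eq ht ((hu.contDiffAt (hIU y)).differentiableAt two_ne_zero)]
      simp
  have h := lieBracket_acceleration_eq_zero hK (hu.contDiffAt (hIU x))
    (by filter_upwards [hIU x] with q hq using haxi q.1 hq.1 q.2)
  rw [hacc, lieBracket_const_smul_right hp.differentiableAt_grad3] at h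
  simpa using h

end Euler

/-- for a Killing field K and a smooth axisymmetric Euler solution (u,p)
whose quantity ⟨∇ₓp, K⟩ decays at infinity, the swirl ⟨u, K⟩ is transported by the
flow γ of u: ⟨u(t,γ(t,x)), K(γ(t,x))⟩ = ⟨u(0,x), K(x)⟩. -/
theorem swirl_transported_by_flow (I : Set ℝ) (hIopen : IsOpen I) (hI0 : (0:ℝ) ∈ I)
    (hIconn : I.OrdConnected)
    (K : V3 → V3) (hKsmooth : ContDiff ℝ (⊤ : ℕ∞) K)
    (hKill : IsKillingOn K Set.univ)
    (u : ℝ → V3 → V3) (p : ℝ → V3 → ℝ)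
    (hu : ContDiffOn ℝ (⊤ : ℕ∞) (fun q : ℝ × V3 => u q.1 q.2) (I ×ˢ (Set.univ : Set V3)))
    (hp : ContDiffOn ℝ (⊤ : ℕ∞) (fun q : ℝ × V3 => p q.1 q.2) (I ×ˢ (Set.univ : Set V3)))
    (heuler : IsEulerSolution I u p)
    (haxi : ∀ t ∈ I, ∀ x : V3, bracket3 K (u t) x = 0)
    (hdecay : ∀ t ∈ I,
      Filter.Tendsto (fun x : V3 => dot3 (grad3 (p t) x) (K x))
        (Filter.cocompact V3) (nhds 0))
    (γ : ℝ → V3 → V3)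
    (hflow : ∀ t ∈ I, ∀ x : V3, HasDerivAt (fun s => γ s x) (u t (γ t x)) t)
    (hflow0 : ∀ x : V3, γ 0 x = x) :
    ∀ t ∈ I, ∀ x : V3,
      dot3 (u t (γ t x)) (K (γ t x)) = dot3 (u 0 x) (K x) := by
  intro t ht x
  have hIU : ∀ s ∈ I, ∀ y, I ×ˢ (univ : Set V3) ∈ 𝓝 (s, y) := fun s hs y =>
    (hIopen.prod isOpen_univ).mem_nhds ⟨hs, mem_univ y⟩
  have hK : ContDiff ℝ 2 K := hKsmooth.of_le ENat.LEInfty.out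
  have hKL : ∀ z, HasFDerivAt K (fderiv ℝ K 0) z := fun z =>
    hKill.fderiv_eq hK z 0 ▸ (hK.differentiable two_ne_zero z).hasFDerivAt
  have hp2 : ∀ s ∈ I, ∀ y, ContDiffAt ℝ 2 (p s) y := fun s hs y =>
    ((hp.contDiffAt (hIU s hs y)).comp y (contDiffAt_const.prodMk contDiffAt_id)).of_le
      ENat.LEInfty.out
  have hpK : ∀ s ∈ I, ∀ y, dot3 (grad3 (p s) y) (K y) = 0 := fun s hs =>
    dot3_grad3_eq_zero_of_lieBracket hKill (hK.differentiable two_ne_zero) (hp2 s hs)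
      (fun y => heuler.lieBracket_grad3_eq_zero hIopen (hu.of_le ENat.LEInfty.out) (hp2 s hs y)
        hKL haxi hs) (hdecay s hs)
  have hswirl : ∀ s ∈ I, HasDerivAt (fun r => dot3 (u r (γ r x)) (K (γ r x))) 0 s := by
    intro s hs
    have hu_s := (hu.contDiffAt (hIU s hs (γ s x))).differentiableAt (by simp)
    have h := hasDerivAt_swirl_along_integralCurve (F := fun q : ℝ × V3 => u q.1 q.2)
      (c := fun r => γ r x) hKill (mem_univ _) (hK.differentiable two_ne_zero _) hu_s
      (hflow s hs x)
    rwa [heuler.acceleration_eq hs hu_s, dot3_eq_dotProduct, neg_dotProduct,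
      ← dot3_eq_dotProduct, hpK s hs, neg_zero] at h
  have h := hIopen.is_const_of_deriv_eq_zero hIconn.isPreconnected
    (fun s hs => (hswirl s hs).differentiableAt.differentiableWithinAt)
    (fun s hs => (hswirl s hs).deriv) ht hI0
  simpa [hflow0] using h
end
end

section
/- Let K be a Killing field on an open set U ⊆ ℝ³. Then K × curl K = ∇|K|² on U, and the Lie bracket of K with its curl vanishes: [K, curl K] = 0 on U. -/
/-! Differentiating the Killing equation shows that the trilinear form `⟨D²K(x)(u, v), w⟩` is
antisymmetric in `(v, w)`; it is also symmetric in `(u, v)`, and a form with both properties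
vanishes. So `D²K = 0` and `curl K` has zero derivative. Pointwise, an antisymmetric `A = DK(x)`
acts as `2 A v = curl K(x) × v`; hence `∇|K|² = 2 Aᵀ K = -2 A K = K × curl K` and
`[K, curl K] = -A (curl K) = -½ curl K × curl K = 0`. -/

noncomputable section

open scoped Matrix Topology

lemma dot3_eq_dotProduct_s7 (u v : V3) : dot3 u v = u ⬝ᵥ v := rfl

lemma dot3_comm (u v : V3) : dot3 u v = dot3 v u := dotProduct_comm u v

lemma cross3_eq_cross (u v : V3) : cross3 u v = u ⨯₃ v := by
  rw [cross_apply]; rfl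

lemma pd_apply (i j : Fin 3) {X : V3 → V3} {x : V3} (hX : DifferentiableAt ℝ X x) :
    pd j (fun y => X y i) x = fderiv ℝ X x (Pi.single j 1) i := by
  rw [pd, fderiv_apply hX]; rfl

lemma fderiv_linearMap_comp {E F G : Type*} [NormedAddCommGroup E] [NormedSpace ℝ E]
    [NormedAddCommGroup F] [NormedSpace ℝ F] [FiniteDimensional ℝ F]
    [NormedAddCommGroup G] [NormedSpace ℝ G] (L : F →ₗ[ℝ] G) {f : E → F} {x : E}
    (hf : DifferentiableAt ℝ f x) (v : E) :
    fderiv ℝ (fun y => L (f y)) x v = L (fderiv ℝ f x v) := by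
  have h : HasFDerivAt (fun y => L (f y))
      ((LinearMap.toContinuousLinearMap L).comp (fderiv ℝ f x)) x :=
    (LinearMap.toContinuousLinearMap L).hasFDerivAt.comp x hf.hasFDerivAt
  rw [h.fderiv]; rfl

lemma eq_zero_of_symm_of_antisymm {α : Type*} (T : α → α → α → ℝ)
    (hsymm : ∀ u v w, T u v w = T v u w) (hanti : ∀ u v w, T u v w = -T u w v)
    (u v w : α) : T u v w = 0 := by
  linarith [hanti u v w, hsymm u w v, hanti w u v, hsymm w v u, hanti v w u, hsymm v u w]

def IsSkewMap (A : V3 →L[ℝ] V3) : Prop :=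
  ∀ v w, dot3 (A v) w + dot3 v (A w) = 0

def skewDefect (v w : V3) : (V3 →L[ℝ] V3) →ₗ[ℝ] ℝ where
  toFun A := dot3 (A v) w + dot3 v (A w)
  map_add' A B := by
    simp only [dot3_eq_dotProduct_s7, add_apply, add_dotProduct, dotProduct_add]
    ring
  map_smul' c A := by
    simp only [dot3_eq_dotProduct_s7, smul_apply, smul_dotProduct,
      dotProduct_smul, smul_eq_mul, RingHom.id_apply]
    ring

def curlLin : (V3 →L[ℝ] V3) →ₗ[ℝ] V3 where
  toFun A := ![A (Pi.single 1 1) 2 - A (Pi.single 2 1) 1, A (Pi.single 2 1) 0 - A (Pi.single 0 1) 2,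
    A (Pi.single 0 1) 1 - A (Pi.single 1 1) 0]
  map_add' A B := by
    simp only [add_apply, Pi.add_apply, Matrix.vec3_add]
    apply Matrix.vec3_eq <;> ring
  map_smul' c A := by
    simp only [smul_apply, Pi.smul_apply, smul_eq_mul, Matrix.smul_vec3, RingHom.id_apply]
    apply Matrix.vec3_eq <;> ring

lemma curl3_eq_curlLin {X : V3 → V3} {x : V3} (hX : DifferentiableAt ℝ X x) :
    curl3 X x = curlLin (fderiv ℝ X x) := by
  simp only [curl3, pd_apply _ _ hX]; rfl

lemma two_smul_apply_eq_cross {A : V3 →L[ℝ] V3} (hA : IsSkewMap A)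
    (v : V3) : (2 : ℝ) • A v = curlLin A ⨯₃ v := by
  have hentry (i j : Fin 3) : A (Pi.single i 1) j + A (Pi.single j 1) i = 0 := by
    simpa [dot3_eq_dotProduct_s7] using hA (Pi.single i 1) (Pi.single j 1)
  have hv : A v = ∑ i, v i • A (Pi.single i 1) := by
    conv_lhs => rw [← (Pi.basisFun ℝ (Fin 3)).sum_repr v]
    simp [map_sum]
  ext k
  fin_cases k <;>
    simp only [hv, curlLin, cross_apply, LinearMap.coe_mk, AddHom.coe_mk, Fin.sum_univ_three,
      Pi.add_apply, Pi.smul_apply, smul_eq_mul, Fin.isValue, Fin.zero_eta, Fin.mk_one,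
      Fin.reduceFinMk, Matrix.cons_val_zero, Matrix.cons_val_one, Matrix.cons_val]
  · linear_combination v 0 * hentry 0 0 + v 1 * hentry 0 1 + v 2 * hentry 0 2
  · linear_combination v 0 * hentry 1 0 + v 1 * hentry 1 1 + v 2 * hentry 1 2
  · linear_combination v 0 * hentry 2 0 + v 1 * hentry 2 1 + v 2 * hentry 2 2

lemma apply_curlLin_eq_zero {A : V3 →L[ℝ] V3} (hA : IsSkewMap A) :
    A (curlLin A) = 0 := by
  have h := two_smul_apply_eq_cross hA (curlLin A)
  rwa [cross_self, smul_eq_zero, or_iff_right two_ne_zero] at h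

lemma pd_dot3_self (i : Fin 3) {X : V3 → V3} {x : V3} (hX : DifferentiableAt ℝ X x) :
    pd i (fun y => dot3 (X y) (X y)) x = 2 * dot3 (fderiv ℝ X x (Pi.single i 1)) (X x) := by
  have hcomp := differentiableAt_pi.1 hX
  simp only [pd, dot3, Finset.mem_univ, hcomp, DifferentiableAt.fun_mul, implies_true,
    fderiv_fun_sum, fderiv_fun_mul, fderiv_apply hX, sum_apply, add_apply, smul_apply,
    ContinuousLinearMap.comp_apply, ContinuousLinearMap.proj_apply, smul_eq_mul]
  rw [Finset.mul_sum]
  exact Finset.sum_congr rfl fun j _ => by ring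

lemma grad3_dot3_self {X : V3 → V3} {x : V3} (hX : DifferentiableAt ℝ X x)
    (hA : IsSkewMap (fderiv ℝ X x)) :
    grad3 (fun y => dot3 (X y) (X y)) x = X x ⨯₃ curlLin (fderiv ℝ X x) := by
  ext i
  have h := congrFun (two_smul_apply_eq_cross hA (X x)) i
  have hi := hA (Pi.single i 1) (X x)
  rw [dot3_eq_dotProduct_s7, dot3_eq_dotProduct_s7, single_one_dotProduct] at hi
  rw [grad3, pd_dot3_self i hX, ← cross_anticomm, Pi.neg_apply, ← h, dot3_eq_dotProduct_s7]
  simp only [Pi.smul_apply, smul_eq_mul]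
  linarith

lemma fderiv_fderiv_eq_zero_of_isKillingOn {U : Set V3} (hU : IsOpen U) {K : V3 → V3}
    (hK : ContDiffOn ℝ 2 K U) (hKill : IsKillingOn K U) {x : V3} (hx : x ∈ U) :
    fderiv ℝ (fderiv ℝ K) x = 0 := by
  have hKx : ContDiffAt ℝ 2 K x := hK.contDiffAt (hU.mem_nhds hx)
  have hdiff : DifferentiableAt ℝ (fderiv ℝ K) x :=
    (hKx.fderiv_right (m := 1) le_rfl).differentiableAt one_ne_zero
  have hsymm : IsSymmSndFDerivAt ℝ K x :=
    hKx.isSymmSndFDerivAt (by simp [minSmoothness_of_isRCLikeNormedField])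
  have hskew (u : V3) : IsSkewMap (fderiv ℝ (fderiv ℝ K) x u) := by
    intro v w
    have hloc : (fun y => skewDefect v w (fderiv ℝ K y)) =ᶠ[𝓝 x] fun _ => 0 := by
      filter_upwards [hU.mem_nhds hx] with y hy using hKill y hy v w
    have h := congrArg (· u) (hloc.fderiv_eq.trans (fderiv_const_apply (𝕜 := ℝ) (0 : ℝ)))
    rwa [fderiv_linearMap_comp _ hdiff] at h
  have hT := eq_zero_of_symm_of_antisymm (fun u v w => dot3 (fderiv ℝ (fderiv ℝ K) x u v) w)
    (fun u v w => by rw [hsymm u v])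
    (fun u v w => by linarith [hskew u v w, dot3_comm v (fderiv ℝ (fderiv ℝ K) x u w)])
  ext u v : 2
  exact dotProduct_self_eq_zero.1 (hT u v _)

lemma fderiv_curl3_eq_zero_of_isKillingOn {U : Set V3} (hU : IsOpen U) {K : V3 → V3}
    (hK : ContDiffOn ℝ 2 K U) (hKill : IsKillingOn K U) {x : V3} (hx : x ∈ U) :
    fderiv ℝ (curl3 K) x = 0 := by
  have hloc : curl3 K =ᶠ[𝓝 x] fun y => curlLin (fderiv ℝ K y) := by
    filter_upwards [hU.mem_nhds hx] with y hy
    exact curl3_eq_curlLin ((hK.contDiffAt (hU.mem_nhds hy)).differentiableAt two_ne_zero)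
  have hdiff : DifferentiableAt ℝ (fderiv ℝ K) x :=
    ((hK.contDiffAt (hU.mem_nhds hx)).fderiv_right (m := 1) le_rfl).differentiableAt one_ne_zero
  ext1 v
  rw [hloc.fderiv_eq, fderiv_linearMap_comp _ hdiff,
    fderiv_fderiv_eq_zero_of_isKillingOn hU hK hKill hx]
  simp

/-- for a Killing field K on an open set U ⊆ ℝ³ one has
K × curl K = ∇|K|² and [K, curl K] = 0 on U. -/
theorem killing_cross_curl_and_bracket (U : Set V3) (hU : IsOpen U)
    (K : V3 → V3) (hKsmooth : ContDiffOn ℝ (⊤ : ℕ∞) K U)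
    (hKill : IsKillingOn K U) :
    ∀ x ∈ U,
      cross3 (K x) (curl3 K x) = grad3 (fun y => dot3 (K y) (K y)) x ∧
      bracket3 K (fun y => curl3 K y) x = 0 := by
  intro x hx
  have hK2 : ContDiffOn ℝ 2 K U := hKsmooth.of_le (ENat.natCast_le_of_coe_top_le_withTop le_rfl 2)
  have hdiff : DifferentiableAt ℝ K x :=
    (hK2.contDiffAt (hU.mem_nhds hx)).differentiableAt two_ne_zero
  rw [cross3_eq_cross, curl3_eq_curlLin hdiff, grad3_dot3_self hdiff (hKill x hx), bracket3,
    fderiv_curl3_eq_zero_of_isKillingOn hU hK2 hKill hx, curl3_eq_curlLin hdiff,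
    apply_curlLin_eq_zero (hKill x hx)]
  simp
end
end
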